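/- For all real A > 0 with A ≠ 1 and B > 0: (B² − A² − 1)³ > 27 A² B² if and only if B^{2/3} > A^{2/3} + 1, and (B² − A² − 1)³ = 27 A² B² if and only if B^{2/3} = A^{2/3} + 1 (here B^{2/3} = (B²)^{1/3} and A^{2/3} = (A²)^{1/3} with real cube roots). -/

import Mathlib

/-!
Put `a = A^{2/3}` and `b = B^{2/3}`. Since cubing is strictly monotone, comparing
`(b³ - a³ - 1)³` with `27 a³ b³ = (3ab)³` amounts to comparing `b³ - a³ - 1` with `3ab`, and
`b³ + (-a)³ + (-1)³ - 3 b (-a) (-1)` factors as `(b - a - 1)` times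
`½ ((b + a)² + (a - 1)² + (b + 1)²)`, which is positive for `b ≥ 0`.
-/

/-- The real cube root. -/
noncomputable def cbrt (x : ℝ) : ℝ :=
  if 0 ≤ x then x ^ ((1 : ℝ) / 3) else -((-x) ^ ((1 : ℝ) / 3))

lemma cbrt_nonneg {x : ℝ} (hx : 0 ≤ x) : 0 ≤ cbrt x := by
  rw [cbrt, if_pos hx]
  positivity

lemma rpow_one_div_three_pow_three {x : ℝ} (hx : 0 ≤ x) : (x ^ ((1 : ℝ) / 3)) ^ 3 = x := by
  rw [← Real.rpow_natCast, ← Real.rpow_mul hx]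
  norm_num

lemma cbrt_pow_three (x : ℝ) : cbrt x ^ 3 = x := by
  unfold cbrt
  split_ifs with hx
  · exact rpow_one_div_three_pow_three hx
  · rw [neg_pow, rpow_one_div_three_pow_three (by linarith)]
    ring

lemma cube_sub_cube_sub_one_sub_three_mul (a b : ℝ) :
    b ^ 3 - a ^ 3 - 1 - 3 * a * b =
      (b - a - 1) * ((b + a) ^ 2 + (a - 1) ^ 2 + (b + 1) ^ 2) / 2 := by
  ring

lemma three_mul_lt_cube_sub_cube_sub_one_iff {a b : ℝ} (hb : 0 ≤ b) :
    3 * a * b < b ^ 3 - a ^ 3 - 1 ↔ a + 1 < b := by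
  have hpos : 0 < (b + a) ^ 2 + (a - 1) ^ 2 + (b + 1) ^ 2 := by positivity
  rw [← sub_pos, cube_sub_cube_sub_one_sub_three_mul, div_pos_iff_of_pos_right two_pos,
    mul_pos_iff_of_pos_right hpos, sub_sub, sub_pos]

lemma cube_sub_cube_sub_one_eq_three_mul_iff {a b : ℝ} (hb : 0 ≤ b) :
    b ^ 3 - a ^ 3 - 1 = 3 * a * b ↔ b = a + 1 := by
  have hpos : 0 < (b + a) ^ 2 + (a - 1) ^ 2 + (b + 1) ^ 2 := by positivity
  rw [← sub_eq_zero, cube_sub_cube_sub_one_sub_three_mul, div_eq_zero_iff, mul_eq_zero,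
    or_iff_left hpos.ne', or_iff_left two_ne_zero, sub_sub, sub_eq_zero]

theorem discriminant_condition_equivalence_general (A B : ℝ) :
    ((B ^ 2 - A ^ 2 - 1) ^ 3 > 27 * A ^ 2 * B ^ 2 ↔ cbrt (B ^ 2) > cbrt (A ^ 2) + 1) ∧
    ((B ^ 2 - A ^ 2 - 1) ^ 3 = 27 * A ^ 2 * B ^ 2 ↔ cbrt (B ^ 2) = cbrt (A ^ 2) + 1) := by
  set a := cbrt (A ^ 2)
  set b := cbrt (B ^ 2)
  have hb : 0 ≤ b := cbrt_nonneg (sq_nonneg B)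
  have hlhs : B ^ 2 - A ^ 2 - 1 = b ^ 3 - a ^ 3 - 1 := by simp only [a, b, cbrt_pow_three]
  have hrhs : 27 * A ^ 2 * B ^ 2 = (3 * a * b) ^ 3 := by
    simp only [a, b, mul_pow, cbrt_pow_three]
    norm_num
  have hodd : Odd 3 := by decide
  rw [hlhs, hrhs, gt_iff_lt, hodd.pow_lt_pow, hodd.pow_inj,
    three_mul_lt_cube_sub_cube_sub_one_iff hb, cube_sub_cube_sub_one_eq_three_mul_iff hb]
  exact ⟨.rfl, .rfl⟩

/-- For `A > 0`, `A ≠ 1`, `B > 0`: `(B² − A² − 1)³ > 27 A² B²` iff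
`B^{2/3} > A^{2/3} + 1`, and `(B² − A² − 1)³ = 27 A² B²` iff `B^{2/3} = A^{2/3} + 1`,
where `B^{2/3} = (B²)^{1/3}` and `A^{2/3} = (A²)^{1/3}` (real cube roots). -/
theorem discriminant_condition_equivalence (A B : ℝ)
    (hA : 0 < A) (hA1 : A ≠ 1) (hB : 0 < B) :
    ((B ^ 2 - A ^ 2 - 1) ^ 3 > 27 * A ^ 2 * B ^ 2 ↔ cbrt (B ^ 2) > cbrt (A ^ 2) + 1) ∧
    ((B ^ 2 - A ^ 2 - 1) ^ 3 = 27 * A ^ 2 * B ^ 2 ↔ cbrt (B ^ 2) = cbrt (A ^ 2) + 1) :=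
  discriminant_condition_equivalence_general A B
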